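/- Let Γ = G *_φ H be the free product of groups G and H with amalgamated subgroups A ≤ G and B ≤ H with respect to an isomorphism φ : A → B, and let G′ ≤ G and H′ ≤ H be subgroups with G′ ∩ A and H′ ∩ B both trivial. If moreover G′ is a free group of rank r₁ and H′ is a free group of rank r₂, then the subgroup Γ′ = ⟨G′, H′⟩ of Γ generated by the images of G′ and H′ is a free group of rank r = r₁ + r₂. -/

import Mathlib

open Monoid

/-- The relator set `{a · φ(a)⁻¹ : a ∈ A}` identifying `A ≤ G` with `B ≤ H` inside the free
product `G ∗ H`. -/
def amalgRels {G H : Type} [Group G] [Group H] (A : Subgroup G) (B : Subgroup H)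
    (φ : A ≃* B) : Set (Coprod G H) :=
  {w | ∃ a : A, w = Coprod.inl (a : G) * (Coprod.inr ((φ a : H)))⁻¹}

/-- The free product `G ∗_φ H` of `G` and `H` with the subgroups `A ≤ G` and `B ≤ H` amalgamated
along the isomorphism `φ : A → B`, i.e. `⟨G, H | a = φ(a) for all a ∈ A⟩`. -/
abbrev Amalg {G H : Type} [Group G] [Group H] (A : Subgroup G) (B : Subgroup H)
    (φ : A ≃* B) : Type :=
  Coprod G H ⧸ Subgroup.normalClosure (amalgRels A B φ)

/-- The canonical homomorphism `G →* G ∗_φ H`. -/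
def Amalg.inlHom {G H : Type} [Group G] [Group H] (A : Subgroup G) (B : Subgroup H)
    (φ : A ≃* B) : G →* Amalg A B φ :=
  (QuotientGroup.mk' _).comp Coprod.inl

/-- The canonical homomorphism `H →* G ∗_φ H`. -/
def Amalg.inrHom {G H : Type} [Group G] [Group H] (A : Subgroup G) (B : Subgroup H)
    (φ : A ≃* B) : H →* Amalg A B φ :=
  (QuotientGroup.mk' _).comp Coprod.inr

/-!
Map `G ∗_φ H` to Mathlib's amalgamated product `PushoutI` over the index set `Bool`, whose normal
form theorem says that a nonempty reduced word (no letter in the amalgamated subgroup) is not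
trivial. A reduced word of the free product `G′ ∗ H′` stays reduced in `G ∗_φ H` because nontrivial
elements of `G′` and `H′` avoid `A` and `B`. Hence `G′ ∗ H′` embeds into `G ∗_φ H` with image
`⟨G′, H′⟩`, and a free product of free groups is free on the disjoint union of the bases.
-/

open Function

namespace Monoid.CoprodI.Word

variable {ι : Type*} {M N : ι → Type*} [∀ i, Monoid (M i)] [∀ i, Monoid (N i)]

def map (f : ∀ i, M i →* N i) (hf : ∀ i, Injective (f i)) (w : Word M) : Word N where
  toList := w.toList.map fun l => ⟨l.1, f l.1 l.2⟩
  ne_one := by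
    simp only [List.mem_map]
    rintro _ ⟨l, hl, rfl⟩
    exact (map_ne_one_iff (f l.1) (hf l.1)).mpr (w.ne_one l hl)
  chain_ne := List.isChain_map_of_isChain (fun l : Σ i, M i => (⟨l.1, f l.1 l.2⟩ : Σ i, N i))
    (fun _ _ h => h) w.chain_ne

theorem prod_map (f : ∀ i, M i →* N i) (hf : ∀ i, Injective (f i)) (w : Word M) :
    (w.map f hf).prod = lift (fun i => of.comp (f i)) w.prod := by
  simp only [prod, map, List.map_map, map_list_prod]
  rfl

end Monoid.CoprodI.Word

namespace Monoid.PushoutI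

open CoprodI

variable {ι : Type*} {G : ι → Type*} {H : Type*} [∀ i, Group (G i)] [Group H]
  {φ : ∀ i, H →* G i}

theorem injective_lift_subtype (hφ : ∀ i, Injective (φ i)) (K : ∀ i, Subgroup (G i))
    (hK : ∀ i, K i ⊓ (φ i).range = ⊥) :
    Injective (CoprodI.lift fun i => (of (φ := φ) i).comp (K i).subtype) := by
  classical
  rw [injective_iff_map_eq_one]
  intro x hx
  set w := Word.equiv x
  have hxw : x = w.prod := (Word.equiv.symm_apply_apply x).symm
  set w' := w.map (fun i => (K i).subtype) (fun i => (K i).subtype_injective)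
  have hred : Reduced φ w' := by
    simp only [Reduced, w', Word.map, List.mem_map]
    rintro _ ⟨l, hl, rfl⟩ hmem
    refine w.ne_one l hl (Subtype.ext ?_)
    have h : (l.2 : G l.1) ∈ K l.1 ⊓ (φ l.1).range := ⟨l.2.2, hmem⟩
    rwa [hK, Subgroup.mem_bot] at h
  have hw' : ofCoprodI (φ := φ) w'.prod = 1 := by
    rw [Word.prod_map, ← hx, hxw, ofCoprodI, ← MonoidHom.comp_apply]
    congr 1
    ext i
    simp
  have hw'_empty := hred.eq_empty_of_mem_range hφ (hw' ▸ one_mem (base φ).range)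
  have hw_empty : w = .empty := by
    ext1
    simpa [w', Word.map] using congrArg Word.toList hw'_empty
  rw [hxw, hw_empty, Word.prod_empty]

end Monoid.PushoutI

section

variable {G H : Type} [Group G] [Group H]

/-- `G` and `H` as a `Bool`-indexed family, ordered so that `Equiv.sumEquivSigmaBool` applies. -/
abbrev amalgFactor (G H : Type) (b : Bool) : Type := cond b H G

instance amalgFactor.instGroup : ∀ b, Group (amalgFactor G H b)
  | false => inferInstanceAs (Group G)
  | true => inferInstanceAs (Group H)

def amalgFactorSubgroup (G' : Subgroup G) (H' : Subgroup H) : ∀ b, Subgroup (amalgFactor G H b)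
  | false => G'
  | true => H'

end

namespace Amalg

variable {G H : Type} [Group G] [Group H] (A : Subgroup G) (B : Subgroup H) (φ : A ≃* B)

def baseHom : ∀ b, A →* amalgFactor G H b
  | false => A.subtype
  | true => B.subtype.comp φ.toMonoidHom

theorem baseHom_injective : ∀ b, Injective (baseHom A B φ b)
  | false => A.subtype_injective
  | true => B.subtype_injective.comp φ.injective

def ofFactor : ∀ b, amalgFactor G H b →* Amalg A B φ
  | false => inlHom A B φ
  | true => inrHom A B φ

def toPushoutI : Amalg A B φ →* PushoutI (baseHom A B φ) :=
  QuotientGroup.lift _ (Coprod.lift (PushoutI.of (φ := baseHom A B φ) false)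
    (PushoutI.of (φ := baseHom A B φ) true)) <|
    Subgroup.normalClosure_le_normal <| by
      rintro _ ⟨a, rfl⟩
      simp only [SetLike.mem_coe, MonoidHom.mem_ker, map_mul, map_inv, Coprod.lift_apply_inl,
        Coprod.lift_apply_inr]
      rw [mul_inv_eq_one]
      exact (PushoutI.of_apply_eq_base (baseHom A B φ) false a).trans
        (PushoutI.of_apply_eq_base (baseHom A B φ) true a).symm

theorem toPushoutI_comp_ofFactor :
    ∀ b, (toPushoutI A B φ).comp (ofFactor A B φ b) = PushoutI.of b
  | false => MonoidHom.ext fun _ => by simp [toPushoutI, ofFactor, inlHom]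
  | true => MonoidHom.ext fun _ => by simp [toPushoutI, ofFactor, inrHom]

variable (G' : Subgroup G) (H' : Subgroup H)

def liftSubgroups : CoprodI (fun b => amalgFactorSubgroup G' H' b) →* Amalg A B φ :=
  CoprodI.lift fun b => (ofFactor A B φ b).comp (amalgFactorSubgroup G' H' b).subtype

theorem range_liftSubgroups :
    (liftSubgroups A B φ G' H').range = G'.map (inlHom A B φ) ⊔ H'.map (inrHom A B φ) := by
  rw [liftSubgroups, CoprodI.range_eq_iSup, iSup_bool_eq, sup_comm]
  simp only [MonoidHom.range_comp, Subgroup.range_subtype]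
  rfl

theorem injective_liftSubgroups (hA : G' ⊓ A = ⊥) (hB : H' ⊓ B = ⊥) :
    Injective (liftSubgroups A B φ G' H') := by
  have hK : ∀ b, amalgFactorSubgroup G' H' b ⊓ (baseHom A B φ b).range = ⊥
    | false => by simpa [amalgFactorSubgroup, baseHom] using hA
    | true => by
      simpa [amalgFactorSubgroup, baseHom, MonoidHom.range_comp, ← MonoidHom.range_eq_map] using hB
  have hcomp : (toPushoutI A B φ).comp (liftSubgroups A B φ G' H') =
      CoprodI.lift fun b => (PushoutI.of b).comp (amalgFactorSubgroup G' H' b).subtype := by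
    refine CoprodI.ext_hom _ _ fun b => ?_
    rw [liftSubgroups, MonoidHom.comp_assoc, CoprodI.lift_comp_of, ← MonoidHom.comp_assoc,
      toPushoutI_comp_ofFactor, CoprodI.lift_comp_of]
  refine Injective.of_comp (f := toPushoutI A B φ) ?_
  rw [← MonoidHom.coe_comp, hcomp]
  exact PushoutI.injective_lift_subtype (baseHom_injective A B φ) _ hK

end Amalg

/-- **Corollary (2).**  Let `Γ = G ∗_φ H` with amalgamated subgroups `A ≤ G`, `B ≤ H` along
`φ : A ≃ B`, and let `G′ ≤ G`, `H′ ≤ H` be subgroups with `G′ ∩ A` and `H′ ∩ B` both trivial.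
If moreover `G′` is a free group of rank `r₁` (i.e. isomorphic to the free group on an index type
`ι₁` of cardinality `r₁`) and `H′` is free of rank `r₂` (on an index type `ι₂`), then the
subgroup `Γ′ = ⟨G′, H′⟩` of `Γ` is a free group of rank `r₁ + r₂`, i.e. isomorphic to the free
group on `ι₁ ⊕ ι₂`. -/
theorem amalg_subgroup_free_of_rank_sum {G H : Type} [Group G] [Group H]
    (A : Subgroup G) (B : Subgroup H) (φ : A ≃* B)
    (G' : Subgroup G) (H' : Subgroup H)
    (hA : G' ⊓ A = ⊥) (hB : H' ⊓ B = ⊥)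
    (ι₁ ι₂ : Type) (e₁ : G' ≃* FreeGroup ι₁) (e₂ : H' ≃* FreeGroup ι₂) :
    Nonempty
      ((↥(G'.map (Amalg.inlHom A B φ) ⊔ H'.map (Amalg.inrHom A B φ)))
        ≃* FreeGroup (ι₁ ⊕ ι₂)) := by
  let factorBasis : ∀ b, FreeGroupBasis (cond b ι₂ ι₁) (amalgFactorSubgroup G' H' b)
    | false => .ofRepr e₁
    | true => .ofRepr e₂
  let basis :=
    (CoprodI.FreeGroupBasis.coprodI factorBasis).reindex (Equiv.sumEquivSigmaBool ι₁ ι₂).symm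
  exact ⟨(MulEquiv.subgroupCongr (Amalg.range_liftSubgroups A B φ G' H')).symm.trans <|
    (MonoidHom.ofInjective (Amalg.injective_liftSubgroups A B φ G' H' hA hB)).symm.trans basis.repr⟩
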